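/- Conversely, if (G,w) and (G',u) receive the same Weisfeiler-Leman color at round t (WL^t(G,w) = WL^t(G',u) on the disjoint union), then they satisfy exactly the same graded modal logic formulae of modal depth at most t. -/
import Mathlib


/-- Syntax of graded multimodal logic over propositions `P` and indices `I`. -/
inductive GMML (P : Type) (I : Type) : Type
  | top : GMML P I
  | prop : P → GMML P I
  | neg : GMML P I → GMML P I
  | and : GMML P I → GMML P I → GMML P I
  | dia : I → ℕ → GMML P I → GMML P I

/-- Satisfaction of a GMML formula at a point of a Kripke model. -/
def GMML.Sat {P I W : Type} (R : I → W → W → Prop) (V : P → W → Prop) :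
    W → GMML P I → Prop
  | _, .top => True
  | w, .prop p => V p w
  | w, .neg φ => ¬ GMML.Sat R V w φ
  | w, .and φ ψ => GMML.Sat R V w φ ∧ GMML.Sat R V w ψ
  | w, .dia α k φ => k ≤ {v | R α w v ∧ GMML.Sat R V v φ}.ncard

/-- Modal depth of a GMML formula. -/
def GMML.md {P I : Type} : GMML P I → ℕ
  | .top => 0
  | .prop _ => 0
  | .neg φ => φ.md
  | .and φ ψ => max φ.md ψ.md
  | .dia _ _ φ => φ.md + 1

/-- A finite pointed Kripke model of vocabulary `(P, I)`. -/
structure PKModel (P I : Type) where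
  W : Type
  fin : Finite W
  R : I → W → W → Prop
  V : P → W → Prop
  pt : W

/-- Satisfaction at the distinguished point of a pointed model. -/
def PKModel.Sat {P I : Type} (M : PKModel P I) (φ : GMML P I) : Prop :=
  GMML.Sat M.R M.V M.pt φ

/-- The Weisfeiler-Leman equivalences `≈_t`: `≈_0` relates everything, and
`a ≈_{t+1} b` iff `a ≈_t b` and for every `≈_t`-equivalence class `C`, `a` and `b`
have equally many `E`-neighbors in `C`. -/
def WLrel {V : Type} (E : V → V → Prop) : ℕ → V → V → Prop
  | 0 => fun _ _ => True
  | t + 1 => fun a b => WLrel E t a b ∧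
      ∀ C : Set V, (∀ x ∈ C, ∀ y, y ∈ C ↔ WLrel E t x y) →
        {a' | E a a' ∧ a' ∈ C}.ncard = {b' | E b b' ∧ b' ∈ C}.ncard

/-- The edge relation of the disjoint union of two graphs. -/
def sumE {V1 V2 : Type} (E1 : V1 → V1 → Prop) (E2 : V2 → V2 → Prop) :
    V1 ⊕ V2 → V1 ⊕ V2 → Prop
  | .inl a, .inl b => E1 a b
  | .inr a, .inr b => E2 a b
  | _, _ => False

section Aux

variable {W : Type} (E : W → W → Prop)

lemma WLrel_equiv : ∀ t, Equivalence (WLrel E t)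
  | 0 => ⟨fun _ => trivial, fun _ => trivial, fun _ _ => trivial⟩
  | t+1 => by
    have IH := WLrel_equiv t
    refine ⟨fun a => ⟨IH.refl a, fun C hC => rfl⟩,
      fun h => ⟨IH.symm h.1, fun C hC => (h.2 C hC).symm⟩,
      fun h1 h2 => ⟨IH.trans h1.1 h2.1, fun C hC => (h1.2 C hC).trans (h2.2 C hC)⟩⟩

lemma WLrel_mono {s t : ℕ} (hst : s ≤ t) {a b : W} (h : WLrel E t a b) :
    WLrel E s a b := by
  induction t with
  | zero => rw [Nat.le_zero.mp hst]; exact h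
  | succ t ih =>
    rcases Nat.lt_or_ge s (t+1) with hl | hg
    · exact ih (Nat.lt_succ_iff.mp hl) h.1
    · rw [le_antisymm hst hg]; exact h

lemma ncard_filter [Fintype W] (P : W → Prop) [DecidablePred P] :
    {x | P x}.ncard = (Finset.univ.filter P).card := by
  rw [← Set.ncard_coe_finset]
  congr 1
  ext x; simp

lemma WL_main {W : Type} [Fintype W] (E : W → W → Prop) (φ : GMML Empty Unit) :
    ∀ (t : ℕ), φ.md ≤ t → ∀ a b, WLrel E t a b →
      (GMML.Sat (fun _ => E) (fun p _ => p.elim) a φ ↔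
       GMML.Sat (fun _ => E) (fun p _ => p.elim) b φ) := by
  induction φ with
  | top => intros; simp [GMML.Sat]
  | prop p => exact p.elim
  | neg ψ ih => intro t ht a b h; simp only [GMML.Sat]; rw [ih t ht a b h]
  | and ψ χ ih1 ih2 =>
    intro t ht a b h
    simp only [GMML.md, max_le_iff] at ht
    simp only [GMML.Sat]
    rw [ih1 t ht.1 a b h, ih2 t ht.2 a b h]
  | dia α k ψ ih =>
    intro t ht a b h
    classical
    have ht' : ψ.md + 1 ≤ t := ht
    have h' : WLrel E (ψ.md + 1) a b := WLrel_mono E ht' h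
    set s := ψ.md with hs
    have hEq := WLrel_equiv E s
    let st : Setoid W := ⟨WLrel E s, hEq⟩
    have key : {v | E a v ∧ GMML.Sat (fun _ => E) (fun p _ => p.elim) v ψ}.ncard
             = {v | E b v ∧ GMML.Sat (fun _ => E) (fun p _ => p.elim) v ψ}.ncard := by
      rw [ncard_filter, ncard_filter]
      rw [Finset.card_eq_sum_card_fiberwise (f := fun x => Quotient.mk st x)
            (t := Finset.univ) (fun x _ => Finset.mem_univ _),
          Finset.card_eq_sum_card_fiberwise (f := fun x => Quotient.mk st x)
            (t := Finset.univ) (fun x _ => Finset.mem_univ _)]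
      refine Finset.sum_congr rfl ?_
      intro q _
      set x := q.out with hx
      have hqx : ∀ y : W, Quotient.mk st y = q ↔ WLrel E s x y := by
        intro y
        rw [← Quotient.out_eq q]
        constructor
        · intro hy; exact hEq.symm (Quotient.exact hy)
        · intro hy; exact Quotient.sound (hEq.symm hy)
      by_cases hsx : GMML.Sat (fun _ => E) (fun p _ => p.elim) x ψ
      · have hC : ∀ x' ∈ {y | WLrel E s x y}, ∀ y, y ∈ {y | WLrel E s x y} ↔ WLrel E s x' y := by
          intro x' hx' y
          exact ⟨fun hy => hEq.trans (hEq.symm hx') hy, fun hy => hEq.trans hx' hy⟩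
        have hcount := h'.2 {y | WLrel E s x y} hC
        have hsat : ∀ y, WLrel E s x y → GMML.Sat (fun _ => E) (fun p _ => p.elim) y ψ :=
          fun y hy => (ih s le_rfl x y hy).mp hsx
        have e1 : ((Finset.univ.filter
              (fun v => E a v ∧ GMML.Sat (fun _ => E) (fun p _ => p.elim) v ψ)).filter
              (fun v => Quotient.mk st v = q))
            = Finset.univ.filter (fun v => E a v ∧ v ∈ {y | WLrel E s x y}) := by
          ext v
          simp only [Finset.mem_filter, Finset.mem_univ, true_and, Set.mem_setOf_eq, hqx v]
          exact ⟨fun hv => ⟨hv.1.1, hv.2⟩, fun hv => ⟨⟨hv.1, hsat v hv.2⟩, hv.2⟩⟩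
        have e2 : ((Finset.univ.filter
              (fun v => E b v ∧ GMML.Sat (fun _ => E) (fun p _ => p.elim) v ψ)).filter
              (fun v => Quotient.mk st v = q))
            = Finset.univ.filter (fun v => E b v ∧ v ∈ {y | WLrel E s x y}) := by
          ext v
          simp only [Finset.mem_filter, Finset.mem_univ, true_and, Set.mem_setOf_eq, hqx v]
          exact ⟨fun hv => ⟨hv.1.1, hv.2⟩, fun hv => ⟨⟨hv.1, hsat v hv.2⟩, hv.2⟩⟩
        rw [e1, e2, ← ncard_filter, ← ncard_filter]
        exact hcount
      · have e1 : ((Finset.univ.filter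
              (fun v => E a v ∧ GMML.Sat (fun _ => E) (fun p _ => p.elim) v ψ)).filter
              (fun v => Quotient.mk st v = q)) = ∅ := by
          ext v
          simp only [Finset.mem_filter, Finset.mem_univ, true_and, Finset.notMem_empty,
            iff_false, hqx v, not_and]
          intro hv hq
          exact absurd ((ih s le_rfl x v hq).mpr hv.2) hsx
        have e2 : ((Finset.univ.filter
              (fun v => E b v ∧ GMML.Sat (fun _ => E) (fun p _ => p.elim) v ψ)).filter
              (fun v => Quotient.mk st v = q)) = ∅ := by
          ext v
          simp only [Finset.mem_filter, Finset.mem_univ, true_and, Finset.notMem_empty,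
            iff_false, hqx v, not_and]
          intro hv hq
          exact absurd ((ih s le_rfl x v hq).mpr hv.2) hsx
        rw [e1, e2]
    simp only [GMML.Sat]
    rw [key]

lemma sat_sum_left {V1 V2 : Type} (E1 : V1 → V1 → Prop) (E2 : V2 → V2 → Prop)
    (φ : GMML Empty Unit) : ∀ (w : V1),
      GMML.Sat (fun _ : Unit => sumE E1 E2) (fun p _ => p.elim) (Sum.inl w) φ ↔
      GMML.Sat (fun _ : Unit => E1) (fun p _ => p.elim) w φ := by
  induction φ with
  | top => intro w; simp [GMML.Sat]
  | prop p => exact p.elim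
  | neg ψ ih => intro w; simp only [GMML.Sat]; rw [ih w]
  | and ψ χ ih1 ih2 => intro w; simp only [GMML.Sat]; rw [ih1 w, ih2 w]
  | dia α k ψ ih =>
    intro w
    simp only [GMML.Sat]
    have hset : {v | sumE E1 E2 (Sum.inl w) v ∧
          GMML.Sat (fun _ : Unit => sumE E1 E2) (fun p _ => p.elim) v ψ}
        = Sum.inl '' {v | E1 w v ∧ GMML.Sat (fun _ : Unit => E1) (fun p _ => p.elim) v ψ} := by
      ext v
      cases v with
      | inl x => simp [sumE, ih x]
      | inr x => simp [sumE]
    rw [hset, Set.ncard_image_of_injective _ Sum.inl_injective]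

lemma sat_sum_right {V1 V2 : Type} (E1 : V1 → V1 → Prop) (E2 : V2 → V2 → Prop)
    (φ : GMML Empty Unit) : ∀ (u : V2),
      GMML.Sat (fun _ : Unit => sumE E1 E2) (fun p _ => p.elim) (Sum.inr u) φ ↔
      GMML.Sat (fun _ : Unit => E2) (fun p _ => p.elim) u φ := by
  induction φ with
  | top => intro u; simp [GMML.Sat]
  | prop p => exact p.elim
  | neg ψ ih => intro u; simp only [GMML.Sat]; rw [ih u]
  | and ψ χ ih1 ih2 => intro u; simp only [GMML.Sat]; rw [ih1 u, ih2 u]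
  | dia α k ψ ih =>
    intro u
    simp only [GMML.Sat]
    have hset : {v | sumE E1 E2 (Sum.inr u) v ∧
          GMML.Sat (fun _ : Unit => sumE E1 E2) (fun p _ => p.elim) v ψ}
        = Sum.inr '' {v | E2 u v ∧ GMML.Sat (fun _ : Unit => E2) (fun p _ => p.elim) v ψ} := by
      ext v
      cases v with
      | inl x => simp [sumE]
      | inr x => simp [sumE, ih x]
    rw [hset, Set.ncard_image_of_injective _ Sum.inr_injective]

end Aux

/-- if two finite pointed graphs receive the same Weisfeiler-Leman color
at round `t` (on the disjoint union), then they satisfy exactly the same graded modal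
formulae (empty proposition vocabulary, single modality) of modal depth at most `t`. -/
theorem same_WL_color_implies_same_GML_formulae {V1 V2 : Type}
    [Fintype V1] [Fintype V2] (E1 : V1 → V1 → Prop) (E2 : V2 → V2 → Prop)
    (w : V1) (u : V2) (t : ℕ)
    (h : WLrel (sumE E1 E2) t (.inl w) (.inr u)) :
    ∀ φ : GMML Empty Unit, φ.md ≤ t →
      (GMML.Sat (fun _ => E1) (fun p _ => p.elim) w φ ↔
        GMML.Sat (fun _ => E2) (fun p _ => p.elim) u φ) := by
  intro φ hφ
  rw [← sat_sum_left E1 E2 φ w, ← sat_sum_right E1 E2 φ u]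
  exact WL_main (sumE E1 E2) φ t hφ _ _ h
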